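/- arXiv:1612.06737 — 7 statements merged into one kernel-verified Lean document; each statement's English description precedes it below -/
import Mathlib

section
/- Let K be a field and n ≥ 1. For every finite set S, the ideal I_n(S) ⊆ A_n(S) equals the ideal generated by all pullbacks π*(f), where π ranges over all maps S → [2n²−1] and f ranges over the determinantal binomials x_{α_1||α_2} x_{β_1||β_2} − x_{α_1||β_2} x_{β_1||α_2} generating I_n([2n²−1]). In other words, the Fin^op-ideal I_n in A_n is generated by I_n([2n²−1]). -/
open MvPolynomial

/-- The determinantal binomial `x_{α₁||α₂} x_{β₁||β₂} − x_{α₁||β₂} x_{β₁||α₂}`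
in `A_n(S) = K[x_γ : γ ∈ [n]^S]`, where the partition `S = S₁ ⊔ S₂` is encoded by
the indicator `P : S → Bool` of `S₁`, and `α, β ∈ [n]^S` restrict to
`α₁, β₁` on `S₁` and `α₂, β₂` on `S₂`. -/
noncomputable def detBinomial {K : Type*} [Field K] {n : ℕ} {S : Type*}
    (P : S → Bool) (α β : S → Fin n) : MvPolynomial (S → Fin n) K :=
  X α * X β -
    X (fun j => if P j then α j else β j) * X (fun j => if P j then β j else α j)

/-- The ideal `I_n(S) ⊆ A_n(S)` generated by all determinantal binomials. -/
noncomputable def In (K : Type*) [Field K] (n : ℕ) (S : Type*) :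
    Ideal (MvPolynomial (S → Fin n) K) :=
  Ideal.span {f | ∃ (P : S → Bool) (α β : S → Fin n), f = detBinomial P α β}

lemma rename_detBinomial {K : Type*} [Field K] {n : ℕ} {S T : Type*} (π : S → T)
    (P : T → Bool) (α β : T → Fin n) :
    rename (fun γ : T → Fin n => γ ∘ π) (detBinomial (K := K) P α β)
      = detBinomial (fun s => P (π s)) (α ∘ π) (β ∘ π) := by
  simp only [detBinomial, map_sub, map_mul, rename_X]
  rfl

/-- The `Fin^op`-ideal `I_n` in `A_n` is generated by `I_n([2n²−1])`: for every
finite set `S`, the ideal `I_n(S)` is generated by the pullbacks `π*(f)` of the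
determinantal binomials `f` generating `I_n([2n²−1])`, over all maps
`π : S → [2n²−1]`. -/
theorem In_generated_in_bounded_size (K : Type*) [Field K] (n : ℕ) (hn : 1 ≤ n)
    (S : Type*) [Fintype S] :
    In K n S = Ideal.span {g | ∃ (π : S → Fin (2 * n ^ 2 - 1))
      (P : Fin (2 * n ^ 2 - 1) → Bool) (α β : Fin (2 * n ^ 2 - 1) → Fin n),
      g = rename (fun γ : Fin (2 * n ^ 2 - 1) → Fin n => γ ∘ π)
            (detBinomial (K := K) P α β)} := by
  classical
  apply le_antisymm
  · rw [In, Ideal.span_le]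
    rintro f ⟨P, α, β, rfl⟩
    set N := 2 * n ^ 2 - 1 with hN
    haveI : Nonempty (Fin n ⊕ Bool × {p : Fin n × Fin n // p.1 ≠ p.2}) :=
      ⟨Sum.inl ⟨0, hn⟩⟩
    have hdiag : Fintype.card {p : Fin n × Fin n // p.1 = p.2} = n := by
      have e : {p : Fin n × Fin n // p.1 = p.2} ≃ Fin n :=
        { toFun := fun p => p.1.1
          invFun := fun a => ⟨(a, a), rfl⟩
          left_inv := by rintro ⟨⟨a, b⟩, h⟩; cases h; rfl
          right_inv := fun a => rfl }
      simp [Fintype.card_congr e]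
    have hne : Fintype.card {p : Fin n × Fin n // p.1 ≠ p.2} = n * n - n := by
      have := Fintype.card_subtype_compl (fun p : Fin n × Fin n => p.1 = p.2)
      simp only [hdiag, Fintype.card_prod, Fintype.card_fin] at this
      exact this
    have hcard : Fintype.card (Fin n ⊕ Bool × {p : Fin n × Fin n // p.1 ≠ p.2})
        ≤ Fintype.card (Fin N) := by
      have hle : n ≤ n * n := Nat.le_mul_of_pos_left n (by omega)
      have hsq : n ^ 2 = n * n := sq n
      simp only [Fintype.card_sum, Fintype.card_prod, Fintype.card_bool,
        Fintype.card_fin, hne, hN, hsq]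
      omega
    obtain ⟨ι⟩ := Function.Embedding.nonempty_of_card_le hcard
    set r : Fin N → Fin n ⊕ Bool × {p : Fin n × Fin n // p.1 ≠ p.2} :=
      Function.invFun ι with hrdef
    have hr : ∀ q, r (ι q) = q := Function.leftInverse_invFun ι.injective
    set enc : S → Fin n ⊕ Bool × {p : Fin n × Fin n // p.1 ≠ p.2} :=
      fun s => if h : α s = β s then Sum.inl (α s)
        else Sum.inr (P s, ⟨(α s, β s), h⟩) with hencdef
    set π : S → Fin N := fun s => ι (enc s) with hπ
    set qα : (Fin n ⊕ Bool × {p : Fin n × Fin n // p.1 ≠ p.2}) → Fin n :=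
      Sum.elim id (fun x => x.2.1.1) with hqα
    set qβ : (Fin n ⊕ Bool × {p : Fin n × Fin n // p.1 ≠ p.2}) → Fin n :=
      Sum.elim id (fun x => x.2.1.2) with hqβ
    set qP : (Fin n ⊕ Bool × {p : Fin n × Fin n // p.1 ≠ p.2}) → Bool :=
      Sum.elim (fun _ => true) (fun x => x.1) with hqP
    have hαs : ∀ s, qα (enc s) = α s := by
      intro s
      by_cases h : α s = β s <;> simp [hencdef, hqα, h]
    have hβs : ∀ s, qβ (enc s) = β s := by
      intro s
      by_cases h : α s = β s <;> simp [hencdef, hqβ, h]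
    refine Ideal.subset_span ⟨π, qP ∘ r, qα ∘ r, qβ ∘ r, ?_⟩
    rw [rename_detBinomial]
    have hα : (qα ∘ r) ∘ π = α := by
      funext s; simp only [Function.comp_apply, hπ, hr, hαs]
    have hβ : (qβ ∘ r) ∘ π = β := by
      funext s; simp only [Function.comp_apply, hπ, hr, hβs]
    have hmix1 : (fun j => if (qP ∘ r) (π j) then α j else β j)
        = fun j => if P j then α j else β j := by
      funext s
      simp only [Function.comp_apply, hπ, hr]
      by_cases h : α s = β s
      · simp [h]
      · simp [hencdef, hqP, h]
    have hmix2 : (fun j => if (qP ∘ r) (π j) then β j else α j)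
        = fun j => if P j then β j else α j := by
      funext s
      simp only [Function.comp_apply, hπ, hr]
      by_cases h : α s = β s
      · simp [h]
      · simp [hencdef, hqP, h]
    simp only [detBinomial, hα, hβ]
    rw [hmix1, hmix2]
  · rw [Ideal.span_le]
    rintro g ⟨π, P, α, β, rfl⟩
    rw [rename_detBinomial, In]
    exact Ideal.subset_span ⟨fun s => P (π s), α ∘ π, β ∘ π, rfl⟩
end

section
/- Fix a monomial order on ℕ^n, i.e. a well-order > such that a > b implies a + c > b + c for all a, b, c ∈ ℕ^n. For a finite linearly ordered set S, define a strict total order > on M_n(S) by: α > β if α ≠ β and, for the smallest j ∈ S such that the columns α(·,j) and β(·,j) differ, one has α(·,j) > β(·,j) in the chosen monomial order on ℕ^n. Then for every OS-morphism π : S → T and all α, β ∈ M_n(T) with α > β, one has π*α > π*β in M_n(S). -/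
/-- `M_n(S)`: the additive monoid of matrices `α : [n] × S → ℕ` all of whose
column sums agree, realised as an `AddSubmonoid` of `Fin n → S → ℕ`. -/
def Mn (n : ℕ) (S : Type*) : AddSubmonoid (Fin n → S → ℕ) where
  carrier := {α | ∀ j l : S, ∑ i, α i j = ∑ i, α i l}
  zero_mem' := by intro j l; simp
  add_mem' := by
    intro a b ha hb j l
    simp only [Pi.add_apply, Finset.sum_add_distrib]
    rw [ha j l, hb j l]

/-- The pullback `π* : M_n(T) → M_n(S)` along a map `π : S → T`,
`(π*α)(i,j) = α(i,π(j))`. -/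
def MnPull {n : ℕ} {S T : Type*} (π : S → T) : Mn n T →+ Mn n S where
  toFun α := ⟨fun i j => α.1 i (π j), fun j l => α.2 (π j) (π l)⟩
  map_zero' := rfl
  map_add' _ _ := rfl

/-- `π : [k] → [l]` is an OS-morphism: surjective, and `j ↦ min π⁻¹(j)` is
strictly increasing. -/
def IsOS {k l : ℕ} (π : Fin k → Fin l) : Prop :=
  Function.Surjective π ∧
    StrictMono fun j : Fin l => sInf {i : ℕ | ∃ h : i < k, π ⟨i, h⟩ = j}

/-- Given a strict order `r` (read: `>`) on `ℕ^n`, the induced relation `>` on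
`M_n([k])`: `α > β` iff the columns of `α` and `β` agree before some column `j`
and at column `j` one has `α(·,j) > β(·,j)` in `r`; equivalently (for a strict
total order `r`) the first column where `α, β` differ is `r`-larger in `α`. -/
def MnGT {n : ℕ} (r : (Fin n → ℕ) → (Fin n → ℕ) → Prop) {k : ℕ}
    (α β : Mn n (Fin k)) : Prop :=
  ∃ j : Fin k, (∀ j' : Fin k, j' < j → (fun i => α.1 i j') = (fun i => β.1 i j'))
    ∧ r (fun i => α.1 i j) (fun i => β.1 i j)

/-- For a monomial order `r` on `ℕ^n` (a well-order `>` compatible with addition),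
pullback along an OS-morphism preserves the induced order on `M_n`:
`α > β` implies `π*α > π*β`. -/
theorem MnPull_strictMono_of_OS (n : ℕ)
    (r : (Fin n → ℕ) → (Fin n → ℕ) → Prop)
    (hwo : IsWellOrder (Fin n → ℕ) (Function.swap r))
    (hadd : ∀ a b c : Fin n → ℕ, r a b → r (a + c) (b + c))
    (k l : ℕ) (π : Fin k → Fin l) (hπ : IsOS π)
    (α β : Mn n (Fin l)) (h : MnGT r α β) :
    MnGT r (MnPull π α) (MnPull π β) := by
  obtain ⟨j, hpre, hr⟩ := h
  set m : Fin l → ℕ := fun j => sInf {i : ℕ | ∃ h : i < k, π ⟨i, h⟩ = j} with hm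
  have hne : {i : ℕ | ∃ h : i < k, π ⟨i, h⟩ = j}.Nonempty := by
    obtain ⟨x, hx⟩ := hπ.1 j
    exact ⟨x.1, x.2, by simpa using hx⟩
  obtain ⟨hlt, hval⟩ := Nat.sInf_mem hne
  refine ⟨⟨m j, hlt⟩, ?_, ?_⟩
  · intro j' hj'
    have hπj' : π j' < j := by
      have hmem : j'.1 ∈ {i : ℕ | ∃ h : i < k, π ⟨i, h⟩ = π j'} := ⟨j'.2, rfl⟩
      have h1 : m (π j') ≤ j'.1 := Nat.sInf_le hmem
      have h2 : m (π j') < m j := lt_of_le_of_lt h1 hj'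
      exact (hπ.2.lt_iff_lt).mp h2
    simpa [MnPull] using hpre (π j') hπj'
  · simpa [MnPull, hm, hval] using hr
end

section
/- Let n ∈ ℕ. For every sequence k_1, k_2, … of natural numbers and every sequence of elements α^(1) ∈ M_n([k_1]), α^(2) ∈ M_n([k_2]), …, there exist indices i < j such that α^(i) divides α^(j), i.e. there exists an OS-morphism π : [k_j] → [k_i] such that π*α^(i) ≤ α^(j) entrywise. In other words, the division relation on ⋃_k M_n([k]) is a well-quasi-order. -/
open Set


theorem sublistForall₂_index {α β : Type*} {r : α → β → Prop} {l₁ : List α} {l₂ : List β}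
    (h : List.SublistForall₂ r l₁ l₂) :
    ∃ σ : ℕ → ℕ, (∀ p q, p < q → q < l₁.length → σ p < σ q) ∧
      ∀ p (hp : p < l₁.length), ∃ hq : σ p < l₂.length,
        r (l₁.get ⟨p, hp⟩) (l₂.get ⟨σ p, hq⟩) := by
  induction h with
  | nil =>
      exact ⟨id, fun p q hpq hq => by simp at hq, fun p hp => by simp at hp⟩
  | @cons a b t₁ t₂ hab hsub ih =>
      obtain ⟨σ, hmono, hrel⟩ := ih
      refine ⟨fun p => match p with | 0 => 0 | q + 1 => σ q + 1, ?_, ?_⟩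
      · intro p q hpq hq
        match p, q with
        | 0, 0 => omega
        | 0, q + 1 => show 0 < σ q + 1; omega
        | p + 1, q + 1 =>
            show σ p + 1 < σ q + 1
            have hq' : q < t₁.length := by simpa using Nat.lt_of_succ_lt_succ hq
            have := hmono p q (by omega) hq'
            omega
      · intro p hp
        match p with
        | 0 => exact ⟨Nat.succ_pos _, hab⟩
        | p + 1 =>
            obtain ⟨hq, hr⟩ := hrel p (by simpa using Nat.lt_of_succ_lt_succ hp)
            exact ⟨by simpa using Nat.succ_lt_succ hq, hr⟩
  | @cons_right b t₁ t₂ hsub ih =>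
      obtain ⟨σ, hmono, hrel⟩ := ih
      refine ⟨fun p => σ p + 1, ?_, ?_⟩
      · intro p q hpq hq
        have := hmono p q hpq hq
        show σ p + 1 < σ q + 1
        omega
      · intro p hp
        obtain ⟨hq, hr⟩ := hrel p hp
        exact ⟨by simpa using Nat.succ_lt_succ hq, hr⟩

theorem lowerSets_pwo :
    ∀ n : ℕ, {D : Set (Fin n → ℕ) | IsLowerSet D}.PartiallyWellOrderedOn (· ≤ ·) := by
  intro n
  induction n with
  | zero =>
      rw [Set.partiallyWellOrderedOn_iff_exists_lt]
      intro f hf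
      by_cases h : (Fin.elim0 : Fin 0 → ℕ) ∈ f 2
      · refine ⟨1, 2, one_lt_two, fun x hx => ?_⟩
        have hx0 : x = Fin.elim0 := funext fun i => i.elim0
        rw [hx0]; exact h
      · refine ⟨2, 3, by norm_num, fun x hx => ?_⟩
        have hx0 : x = Fin.elim0 := funext fun i => i.elim0
        exact absurd (hx0 ▸ hx) h
  | succ n ih =>
      rw [Set.partiallyWellOrderedOn_iff_exists_lt]
      intro f hf
      -- slices
      set S : ℕ → ℕ → Set (Fin n → ℕ) := fun m t => {x | Fin.snoc x (t : ℕ) ∈ f m} with hS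
      have hsnoc : ∀ (x y : Fin n → ℕ) (s t : ℕ), x ≤ y → s ≤ t →
          (Fin.snoc x s : Fin (n+1) → ℕ) ≤ Fin.snoc y t := by
        intro x y s t hxy hst i
        refine Fin.lastCases ?_ ?_ i
        · simpa using hst
        · intro i; simpa using hxy i
      have hS_lower : ∀ m t, IsLowerSet (S m t) := by
        intro m t y x hxy hx
        exact hf m (hsnoc x y t t hxy le_rfl) hx
      have hS_anti : ∀ m t t', t ≤ t' → S m t' ⊆ S m t := by
        intro m t t' htt' x hx
        exact hf m (hsnoc x x t t' le_rfl htt') hx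
      -- stabilization
      have hstab : ∀ m, ∃ T, ∀ t, T ≤ t → S m t = S m T := by
        intro m
        by_contra hc
        push_neg at hc
        have hc' : ∀ T, ∃ t, T ≤ t ∧ S m t ≠ S m T := by
          intro T
          obtain ⟨t, ht1, ht2⟩ := hc T
          exact ⟨t, ht1, ht2⟩
        set g : ℕ → ℕ := fun r => Nat.rec 0 (fun _ p => (hc' p).choose) r with hg
        have hgstep : ∀ r, g r ≤ g (r + 1) ∧ S m (g (r + 1)) ≠ S m (g r) := by
          intro r
          have := (hc' (g r)).choose_spec
          exact ⟨this.1, this.2⟩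
        have hgmono : Monotone g := by
          apply monotone_nat_of_le_succ
          intro r; exact (hgstep r).1
        obtain ⟨a, b, hab, hle⟩ := ih.exists_lt (f := fun r => S m (g r)) (fun r => hS_lower m (g r))
        have h1 : S m (g b) ⊆ S m (g a) := hS_anti m (g a) (g b) (hgmono hab.le)
        have h2 : S m (g a) = S m (g b) := le_antisymm hle h1
        have h3 : S m (g b) ⊆ S m (g (a+1)) := hS_anti m (g (a+1)) (g b) (hgmono hab)
        have h4 : S m (g (a+1)) ⊆ S m (g a) := hS_anti m (g a) (g (a+1)) (hgstep a).1
        exact (hgstep a).2 (le_antisymm h4 (h2 ▸ h3))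
      choose T hT using hstab
      -- encoding
      have hlists := Set.PartiallyWellOrderedOn.partiallyWellOrderedOn_sublistForall₂
        (· ≤ ·) ih
      have hpair := ih.prod hlists
      set E : ℕ → Set (Fin n → ℕ) × List (Set (Fin n → ℕ)) :=
        fun m => (S m (T m), (List.range (T m)).map (S m)) with hE
      have hEmem : ∀ m, E m ∈ {D : Set (Fin n → ℕ) | IsLowerSet D} ×ˢ
          {l : List (Set (Fin n → ℕ)) | ∀ x, x ∈ l → x ∈ {D | IsLowerSet D}} := by
        intro m
        refine ⟨hS_lower m (T m), ?_⟩
        intro x hx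
        simp only [hE, List.mem_map, List.mem_range] at hx
        obtain ⟨t, _, rfl⟩ := hx
        exact hS_lower m t
      obtain ⟨i, j, hij, hfst, hsnd⟩ := hpair.exists_lt (f := E) hEmem
      -- decode
      have hjT : ∀ t, S j (T j) ⊆ S j t := by
        intro t
        rcases le_total t (T j) with h | h
        · exact hS_anti j t (T j) h
        · rw [hT j t h]
      have hslice : ∀ t, S i t ⊆ S j t := by
        intro t
        rcases le_or_gt (T i) t with h | h
        · rw [hT i t h]
          exact fun x hx => hjT t (hfst hx)
        · obtain ⟨σ, hmono, hrel⟩ := sublistForall₂_index hsnd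
          have hlen1 : ((List.range (T i)).map (S i)).length = T i := by simp
          obtain ⟨hq, hr⟩ := hrel t (by rw [hlen1]; exact h)
          -- get values
          have hv1 : ((List.range (T i)).map (S i)).get ⟨t, by rw [hlen1]; exact h⟩ = S i t := by
            simp
          have hq' : σ t < T j := by simpa [hE] using hq
          have hv2 : ((List.range (T j)).map (S j)).get ⟨σ t, hq⟩ = S j (σ t) := by
            simp
          have hts : t ≤ σ t := by
            have key : ∀ p, p < ((List.range (T i)).map (S i)).length → p ≤ σ p := by
              intro p
              induction p with
              | zero => intro _; exact Nat.zero_le _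
              | succ p ihp =>
                  intro hp
                  have h1 := hmono p (p + 1) (Nat.lt_succ_self p) hp
                  have h2 := ihp (by omega)
                  omega
            exact key t (by rw [hlen1]; exact h)
          calc S i t ⊆ S j (σ t) := by rw [← hv1, ← hv2]; exact hr
            _ ⊆ S j t := hS_anti j t (σ t) hts
      refine ⟨i, j, hij, fun x hx => ?_⟩
      have hx' : Fin.snoc (Fin.init x) (x (Fin.last n)) ∈ f i := by
        rw [Fin.snoc_init_self]; exact hx
      have h2 : Fin.snoc (Fin.init x) (x (Fin.last n)) ∈ f j := hslice (x (Fin.last n)) hx'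
      rwa [Fin.snoc_init_self] at h2

theorem words_good (n : ℕ) (k : ℕ → ℕ) (hk : ∀ m, 0 < k m)
    (v : (m : ℕ) → Fin (k m) → (Fin n → ℕ)) :
    ∃ i j, i < j ∧ ∃ σ : Fin (k i) → Fin (k j), StrictMono σ ∧
      (∀ a, v i a ≤ v j (σ a)) ∧ (∀ b : Fin (k j), ∃ a, (σ a : ℕ) ≤ (b : ℕ) ∧ v i a ≤ v j b) := by
  classical
  have hQ : (univ : Set (Fin n → ℕ)).IsPWO :=
    Set.isPWO_of_wellQuasiOrderedLE univ
  -- total lift of columns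
  set w : ℕ → ℕ → (Fin n → ℕ) := fun m b => if h : b < k m then v m ⟨b, h⟩ else 0 with hw
  set L : ℕ → Set (Fin n → ℕ) := fun m => {x | ∀ a : Fin (k m), ¬ v m a ≤ x} with hL
  set Pt : ℕ → ℕ → Set (Fin n → ℕ) := fun m c => {x | ∀ a : Fin (k m), (a : ℕ) < c → ¬ v m a ≤ x} with hPt
  have hL_lower : ∀ m, IsLowerSet (L m) := by
    intro m x y hyx hx a hay
    exact hx a (le_trans hay hyx)
  have hPt_lower : ∀ m c, IsLowerSet (Pt m c) := by
    intro m c x y hyx hx a hac hay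
    exact hx a hac (le_trans hay hyx)
  -- step 1 : monotone subsequence for L
  obtain ⟨g₁, hg₁⟩ := (lowerSets_pwo n).exists_monotone_subseq (f := L) (fun m => hL_lower m)
  -- step 2 : monotone subsequence for heads
  obtain ⟨g₂, hg₂⟩ := hQ.exists_monotone_subseq (f := fun m => w (g₁ m) 0) (fun _ => mem_univ _)
  -- alphabet pwo
  have halpha : ((univ : Set (Fin n → ℕ)) ×ˢ {D : Set (Fin n → ℕ) | IsLowerSet D}).PartiallyWellOrderedOn
      ((· ≤ ·) : (Fin n → ℕ) × Set (Fin n → ℕ) → (Fin n → ℕ) × Set (Fin n → ℕ) → Prop) := by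
    rw [Set.partiallyWellOrderedOn_iff_exists_lt]
    intro f hf
    obtain ⟨a, b, hab, hr⟩ := (hQ.prod (lowerSets_pwo n)).exists_lt hf
    exact ⟨a, b, hab, Prod.le_def.mpr hr⟩
  have hig := Set.PartiallyWellOrderedOn.partiallyWellOrderedOn_sublistForall₂
      ((· ≤ ·) : (Fin n → ℕ) × Set (Fin n → ℕ) → (Fin n → ℕ) × Set (Fin n → ℕ) → Prop) halpha
  set tl : ℕ → List ((Fin n → ℕ) × Set (Fin n → ℕ)) :=
    fun m => List.ofFn (fun p : Fin (k m - 1) => (w m ((p : ℕ) + 1), Pt m ((p : ℕ) + 1))) with htl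
  obtain ⟨i', j', hij', hsub⟩ := hig.exists_lt (f := fun m => tl (g₁ (g₂ m))) (by
    intro m x hx
    simp only [htl, List.mem_ofFn] at hx
    obtain ⟨p, rfl⟩ := hx
    exact ⟨mem_univ _, hPt_lower _ _⟩)
  set i := g₁ (g₂ i') with hi
  set j := g₁ (g₂ j') with hj
  have hijlt : i < j := g₁.strictMono (g₂.strictMono hij')
  have hL' : L i ⊆ L j := hg₁ (g₂ i') (g₂ j') (g₂.strictMono hij').le
  have hhead : w i 0 ≤ w j 0 := hg₂ hij'.le
  -- index map from the sublist relation
  obtain ⟨σn, hσmono, hσrel⟩ := sublistForall₂_index hsub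
  have hlen : ∀ m, (tl m).length = k m - 1 := by intro m; simp [htl]
  have hget : ∀ m p (hp : p < (tl m).length),
      (tl m).get ⟨p, hp⟩ = (w m (p + 1), Pt m (p + 1)) := by
    intro m p hp
    simp [htl]
  have hσbn : ∀ p, p < k i - 1 → σn p < k j - 1 := by
    intro p hp
    obtain ⟨hq, -⟩ := hσrel p (by rw [hlen]; exact hp)
    rw [hlen] at hq; exact hq
  have hrel' : ∀ p, (hp : p < k i - 1) →
      w i (p + 1) ≤ w j (σn p + 1) ∧ Pt i (p + 1) ⊆ Pt j (σn p + 1) := by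
    intro p hp
    obtain ⟨hq, hr⟩ := hσrel p (by rw [hlen]; exact hp)
    rw [hget i p _, hget j (σn p) _] at hr
    exact ⟨hr.1, hr.2⟩
  have hσmono' : ∀ p q, p < q → q < k i - 1 → σn p < σn q := by
    intro p q h1 h2; exact hσmono p q h1 (by rw [hlen]; exact h2)
  -- build σf
  have hbnd : ∀ a : Fin (k i), (a : ℕ) ≠ 0 → σn ((a : ℕ) - 1) + 1 < k j := by
    intro a ha
    have h1 : (a : ℕ) - 1 < k i - 1 := by have := a.isLt; omega
    have := hσbn _ h1
    omega
  set σf : Fin (k i) → Fin (k j) := fun a =>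
    if ha : (a : ℕ) = 0 then ⟨0, hk j⟩ else ⟨σn ((a : ℕ) - 1) + 1, hbnd a ha⟩ with hσf
  have hσfval : ∀ a : Fin (k i), (a : ℕ) ≠ 0 → (σf a : ℕ) = σn ((a : ℕ) - 1) + 1 := by
    intro a ha; simp [hσf, ha]
  have hσf0 : ∀ a : Fin (k i), (a : ℕ) = 0 → (σf a : ℕ) = 0 := by
    intro a ha; simp [hσf, ha]
  have hσfmono : StrictMono σf := by
    intro a a' haa'
    have hval : (a : ℕ) < (a' : ℕ) := haa'
    rw [Fin.lt_def]
    rcases Nat.eq_zero_or_pos (a : ℕ) with h0 | h0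
    · rw [hσf0 a h0, hσfval a' (by omega)]
      omega
    · rw [hσfval a (by omega), hσfval a' (by omega)]
      have := hσmono' ((a : ℕ) - 1) ((a' : ℕ) - 1) (by omega) (by have := a'.isLt; omega)
      omega
  have hwv : ∀ m (a : Fin (k m)), w m (a : ℕ) = v m a := by
    intro m a
    simp only [hw, a.isLt, dif_pos]
  have hdom : ∀ a, v i a ≤ v j (σf a) := by
    intro a
    rcases Nat.eq_zero_or_pos (a : ℕ) with h0 | h0
    · have h1 : w i (a : ℕ) = w i 0 := by rw [h0]
      have h2 : ((σf a : ℕ) : ℕ) = 0 := hσf0 a h0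
      calc v i a = w i 0 := by rw [← hwv i a, h0]
        _ ≤ w j 0 := hhead
        _ = v j (σf a) := by rw [← hwv j (σf a), h2]
    · have h1 : (a : ℕ) - 1 + 1 = (a : ℕ) := by omega
      have h2 := (hrel' ((a : ℕ) - 1) (by have := a.isLt; omega)).1
      rw [h1] at h2
      calc v i a = w i (a : ℕ) := (hwv i a).symm
        _ ≤ w j (σn ((a : ℕ) - 1) + 1) := h2
        _ = v j (σf a) := by rw [← hwv j (σf a), hσfval a (by omega)]
  refine ⟨i, j, hijlt, σf, hσfmono, hdom, ?_⟩
  -- covering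
  intro b
  set a₀ : Fin (k i) := ⟨0, hk i⟩ with ha₀
  set A : Finset (Fin (k i)) := Finset.univ.filter (fun a => (σf a : ℕ) ≤ (b : ℕ)) with hA
  have ha₀A : a₀ ∈ A := by
    simp only [hA, Finset.mem_filter, Finset.mem_univ, true_and]
    rw [hσf0 a₀ rfl]
    exact Nat.zero_le _
  set astar := A.max' ⟨a₀, ha₀A⟩ with hastar
  have hastarA : astar ∈ A := A.max'_mem _
  have hastar_le : (σf astar : ℕ) ≤ (b : ℕ) := by
    have := hastarA
    simp only [hA, Finset.mem_filter] at this
    exact this.2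
  by_cases hlast : (astar : ℕ) = k i - 1
  · -- use the global letter sets
    have hnb : v j b ∉ L j := fun hc => hc b le_rfl
    have hnbi : v j b ∉ L i := fun hc => hnb (hL' hc)
    have hex : ∃ a : Fin (k i), v i a ≤ v j b := by
      by_contra hc
      push_neg at hc
      exact hnbi (fun a hay => absurd hay (hc a))
    obtain ⟨a, ha⟩ := hex
    refine ⟨a, ?_, ha⟩
    have haa : a ≤ astar := by
      rw [Fin.le_def]
      have := a.isLt; omega
    exact le_trans (Fin.le_def.mp (hσfmono.monotone haa)) hastar_le
  · have hlt : (astar : ℕ) + 1 < k i := by have := astar.isLt; omega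
    set a1 : Fin (k i) := ⟨(astar : ℕ) + 1, hlt⟩ with ha1
    have ha1n : ¬ (σf a1 : ℕ) ≤ (b : ℕ) := by
      intro hcon
      have hmem : a1 ∈ A := by
        simp only [hA, Finset.mem_filter, Finset.mem_univ, true_and]
        exact hcon
      have := A.le_max' a1 hmem
      rw [Fin.le_def] at this
      simp only [ha1] at this
      omega
    have ha1val : (σf a1 : ℕ) = σn (astar : ℕ) + 1 := by
      rw [hσfval a1 (by simp [ha1])]
      simp [ha1]
    have hblt : (b : ℕ) < σn (astar : ℕ) + 1 := by
      rw [ha1val] at ha1n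
      omega
    have hPinc : Pt i ((astar : ℕ) + 1) ⊆ Pt j (σn (astar : ℕ) + 1) := by
      have h2 := (hrel' (astar : ℕ) (by have := astar.isLt; omega)).2
      exact h2
    have hnb : v j b ∉ Pt j (σn (astar : ℕ) + 1) := fun hc => hc b hblt le_rfl
    have hnbi : v j b ∉ Pt i ((astar : ℕ) + 1) := fun hc => hnb (hPinc hc)
    have hex : ∃ a : Fin (k i), (a : ℕ) < (astar : ℕ) + 1 ∧ v i a ≤ v j b := by
      by_contra hc
      push_neg at hc
      exact hnbi (fun a hac hay => absurd hay (hc a hac))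
    obtain ⟨a, hac, ha⟩ := hex
    refine ⟨a, ?_, ha⟩
    have haa : a ≤ astar := by rw [Fin.le_def]; omega
    exact le_trans (Fin.le_def.mp (hσfmono.monotone haa)) hastar_le

/-- The division relation on `⋃_k M_n([k])` is a well-quasi-order: in any infinite
sequence `α⁽¹⁾ ∈ M_n([k₁]), α⁽²⁾ ∈ M_n([k₂]), …` there are indices `i < j` such
that `α⁽ⁱ⁾` divides `α⁽ʲ⁾`, i.e. `π*α⁽ⁱ⁾ ≤ α⁽ʲ⁾` entrywise for some OS-morphism
`π : [k_j] → [k_i]`. -/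
theorem Mn_division_wqo (n : ℕ) (k : ℕ → ℕ)
    (α : (m : ℕ) → Mn n (Fin (k m))) :
    ∃ i j : ℕ, i < j ∧ ∃ π : Fin (k j) → Fin (k i), IsOS π ∧
      ∀ (a : Fin n) (b : Fin (k j)), ((MnPull π (α i)) : Mn n (Fin (k j))).1 a b ≤ (α j).1 a b := by
  classical
  by_cases hz : ∃ i j : ℕ, i < j ∧ k i = 0 ∧ k j = 0
  · obtain ⟨i, j, hij, hki, hkj⟩ := hz
    refine ⟨i, j, hij, fun b => absurd b.isLt (by omega), ⟨?_, ?_⟩, ?_⟩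
    · intro y; exact absurd y.isLt (by omega)
    · intro a a' h; exact absurd a.isLt (by omega)
    · intro a b; exact absurd b.isLt (by omega)
  · have hM : ∃ M : ℕ, ∀ m, M ≤ m → 0 < k m := by
      by_cases h0 : ∃ m, k m = 0
      · obtain ⟨m0, hm0⟩ := h0
        refine ⟨m0 + 1, fun m hm => ?_⟩
        rcases Nat.eq_zero_or_pos (k m) with h | h
        · exact absurd ⟨m0, m, by omega, hm0, h⟩ hz
        · exact h
      · push_neg at h0
        exact ⟨0, fun m _ => Nat.pos_of_ne_zero (h0 m)⟩
    obtain ⟨M, hM⟩ := hM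
    obtain ⟨i₀, j₀, hij₀, σ, hσmono, hdom, hcov⟩ :=
      words_good n (fun m => k (M + m)) (fun m => hM _ (Nat.le_add_right M m))
        (fun m b => fun r => (α (M + m)).1 r b)
    refine ⟨M + i₀, M + j₀, by omega, ?_⟩
    set π : Fin (k (M + j₀)) → Fin (k (M + i₀)) := fun b =>
      if h : ∃ a, σ a = b then h.choose else (hcov b).choose with hπ
    have hπ1 : ∀ b, (σ (π b) : ℕ) ≤ (b : ℕ) := by
      intro b
      by_cases h : ∃ a, σ a = b
      · simp only [hπ, dif_pos h]; rw [h.choose_spec]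
      · simp only [hπ, dif_neg h]; exact (hcov b).choose_spec.1
    have hπ2 : ∀ b, ∀ r, (α (M + i₀)).1 r (π b) ≤ (α (M + j₀)).1 r b := by
      intro b
      by_cases h : ∃ a, σ a = b
      · simp only [hπ, dif_pos h]
        intro r
        have h2 := hdom h.choose r
        rw [h.choose_spec] at h2
        exact h2
      · simp only [hπ, dif_neg h]
        exact fun r => (hcov b).choose_spec.2 r
    have hπσ : ∀ a, π (σ a) = a := by
      intro a
      have h : ∃ a', σ a' = σ a := ⟨a, rfl⟩
      simp only [hπ, dif_pos h]
      exact hσmono.injective h.choose_spec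
    have hval : ∀ a : Fin (k (M + i₀)),
        sInf {i : ℕ | ∃ h : i < k (M + j₀), π ⟨i, h⟩ = a} = (σ a : ℕ) := by
      intro a
      have hmem : (σ a : ℕ) ∈ {i : ℕ | ∃ h : i < k (M + j₀), π ⟨i, h⟩ = a} :=
        ⟨(σ a).isLt, by rw [Fin.eta]; exact hπσ a⟩
      refine le_antisymm (Nat.sInf_le hmem) (le_csInf ⟨_, hmem⟩ ?_)
      rintro x ⟨hx, hxa⟩
      have h1 := hπ1 ⟨x, hx⟩
      rw [hxa] at h1
      exact h1
    refine ⟨π, ⟨?_, ?_⟩, ?_⟩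
    · intro a; exact ⟨σ a, hπσ a⟩
    · intro a a' haa'
      show sInf {i : ℕ | ∃ h : i < k (M + j₀), π ⟨i, h⟩ = a} <
        sInf {i : ℕ | ∃ h : i < k (M + j₀), π ⟨i, h⟩ = a'}
      rw [hval a, hval a']
      exact hσmono haa'
    · intro r b
      exact hπ2 b r
end

section
/- Let K be a field and n ≥ 2. For k ∈ ℕ with k ≥ 2, let u_k := ∏_{m=1}^k x_{α^{(k,m)}} ∈ A_n([k]), where α^{(k,m)} ∈ [n]^{[k]} is the function with α^{(k,m)}(m) = 2 and α^{(k,m)}(j) = 1 for all j ≠ m. Then for all l, k with 2 ≤ l < k and every map π : [k] → [l], the monomial π*(u_l) = ∏_{m=1}^l x_{α^{(l,m)}∘π} does not divide the monomial u_k in the polynomial ring A_n([k]). -/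
open MvPolynomial

/-- `α^{(k,m)} : [k] → [n]` is the function taking the value `2` at `m` and `1`
elsewhere; here states `1, 2 ∈ [n]` (with `n = N + 2 ≥ 2`) are encoded as
`0, 1 : Fin (N + 2)`. -/
def alphaKM {N : ℕ} (k : ℕ) (m : Fin k) : Fin k → Fin (N + 2) :=
  fun j => if j = m then 1 else 0

/-- The monomial `u_k = ∏_{m=1}^k x_{α^{(k,m)}}` in `A_n([k]) = K[x_α : α ∈ [n]^[k]]`. -/
noncomputable def uMonomial (K : Type*) [Field K] (N k : ℕ) :
    MvPolynomial (Fin k → Fin (N + 2)) K :=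
  ∏ m : Fin k, X (alphaKM k m)

lemma prod_X_eq_monomial' {σ K ι : Type*} [CommSemiring K] [DecidableEq σ]
    (s : Finset ι) (f : ι → σ) :
    (∏ i ∈ s, (X (f i) : MvPolynomial σ K)) =
      monomial (∑ i ∈ s, Finsupp.single (f i) 1) 1 := by
  classical
  induction s using Finset.induction with
  | empty => simp
  | insert _ _ h ih =>
    rw [Finset.prod_insert h, Finset.sum_insert h, ih, X, monomial_mul, one_mul]

/-- For `2 ≤ l < k` and any map `π : [k] → [l]`, the pullback `π*(u_l)` does not
divide `u_k` in the polynomial ring `A_n([k])`. -/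
theorem pullback_u_not_dvd (K : Type*) [Field K] (N : ℕ) (l k : ℕ)
    (hl : 2 ≤ l) (hlk : l < k) (π : Fin k → Fin l) :
    ¬ (rename (fun α : Fin l → Fin (N + 2) => α ∘ π) (uMonomial K N l) ∣
        uMonomial K N k) := by
  classical
  intro hdvd
  rw [uMonomial, uMonomial, prod_X_eq_monomial', prod_X_eq_monomial',
    rename_monomial, monomial_dvd_monomial] at hdvd
  have hE : Finsupp.mapDomain (fun α : Fin l → Fin (N+2) => α ∘ π)
      (∑ m : Fin l, Finsupp.single (alphaKM l m) 1)
      = ∑ m : Fin l, Finsupp.single (alphaKM l m ∘ π) 1 := by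
    rw [Finsupp.mapDomain_finset_sum]
    simp [Finsupp.mapDomain_single]
  have hle : (∑ m : Fin l, Finsupp.single ((alphaKM (N := N) l m) ∘ π) 1) ≤
      ∑ m : Fin k, Finsupp.single (alphaKM (N := N) k m) (1 : ℕ) := by
    rcases hdvd.1 with h | h
    · exact absurd h one_ne_zero
    · rwa [hE] at h
  have hinj : Function.Injective π := by
    intro a b hab
    set m := π a with hm
    set σ0 : Fin k → Fin (N+2) := alphaKM (N := N) l m ∘ π with hσ0
    have h1 : 1 ≤ (∑ m' : Fin l, Finsupp.single (alphaKM l m' ∘ π) 1) σ0 := by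
      rw [Finsupp.finset_sum_apply]
      calc (1:ℕ) = Finsupp.single (alphaKM l m ∘ π) 1 σ0 := by simp [hσ0]
        _ ≤ ∑ m' : Fin l, Finsupp.single (alphaKM l m' ∘ π) 1 σ0 :=
          Finset.single_le_sum
            (f := fun m' : Fin l => (Finsupp.single (alphaKM (N := N) l m' ∘ π) 1) σ0)
            (fun _ _ => Nat.zero_le _) (Finset.mem_univ m)
    have h2 : (∑ m' : Fin k, Finsupp.single (alphaKM k m') 1) σ0 ≠ 0 := by
      have := hle σ0
      omega
    rw [Finsupp.finset_sum_apply] at h2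
    obtain ⟨m', -, hm'⟩ := Finset.exists_ne_zero_of_sum_ne_zero h2
    have heq : alphaKM k m' = σ0 := by
      by_contra h
      simp [Finsupp.single_apply, h] at hm'
    have hone : (1 : Fin (N+2)) ≠ 0 := one_ne_zero
    have key : ∀ j : Fin k, j = m' ↔ π j = m := by
      intro j
      have hj := congrFun heq j
      simp only [hσ0, alphaKM, Function.comp_apply] at hj
      constructor
      · intro h
        by_contra h'
        rw [if_pos h, if_neg h'] at hj
        exact hone hj
      · intro h
        by_contra h'
        rw [if_neg h', if_pos h] at hj
        exact hone hj.symm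
    have ha : a = m' := (key a).mpr hm.symm
    have hb : b = m' := (key b).mpr (by rw [hm, ← hab])
    rw [ha, hb]
  have := Fintype.card_le_of_injective π hinj
  simp at this
  omega
end

section
/- Let K be a field and n ≥ 2. Then the Fin^op-algebra A_n is not Noetherian: there exists an assignment of an ideal P(S) ⊆ A_n(S) to every finite set S with π*(P(T)) ⊆ P(S) for every map π : S → T, such that there do NOT exist finitely many finite sets S_1,…,S_N and elements f_m ∈ P(S_m) with every P(S) generated by { π*(f_m) : m ∈ [N], π : S → S_m }. In fact one may take P to be the smallest such assignment of ideals with u_k ∈ P([k]) for all k ≥ 2, where u_k = ∏_{m=1}^k x_{α^{(k,m)}} and α^{(k,m)} ∈ [n]^{[k]} has α^{(k,m)}(m) = 2 and all other values 1. -/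
open MvPolynomial

/-- The smallest pullback-stable assignment of ideals `P(S) ⊆ A_n(S)` with
`u_k ∈ P([k])` for all `k ≥ 2`: `P(S)` is generated by all pullbacks `π*(u_k)`
along maps `π : S → [k]`, `k ≥ 2`. -/
noncomputable def Pu (K : Type) [Field K] (N : ℕ) (S : Type) :
    Ideal (MvPolynomial (S → Fin (N + 2)) K) :=
  Ideal.span {f | ∃ (k : ℕ), 2 ≤ k ∧ ∃ π : S → Fin k,
    f = rename (fun α : Fin k → Fin (N + 2) => α ∘ π) (uMonomial K N k)}

/-- `u_k` is a single monomial with exponent `∑_m e_{α^{(k,m)}}`. -/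
lemma uMonomial_eq (K : Type) [Field K] (N k : ℕ) :
    uMonomial K N k =
      monomial (∑ m : Fin k, Finsupp.single (alphaKM (N := N) k m) 1) 1 := by
  unfold uMonomial
  have : ∀ m : Fin k, (X (alphaKM (N := N) k m) : MvPolynomial _ K)
      = monomial (Finsupp.single (alphaKM (N := N) k m) 1) 1 := fun m => rfl
  simp_rw [this]
  induction (Finset.univ : Finset (Fin k)) using Finset.induction with
  | empty => simp
  | insert _ _ h ih => rw [Finset.prod_insert h, Finset.sum_insert h, ih, monomial_mul, one_mul]

/-- `Pu` is stable under pullbacks. -/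
lemma pullback_mem (K : Type) [Field K] (N : ℕ) (S T : Type) (π : S → T) :
    ∀ f ∈ Pu K N T, rename (fun α : T → Fin (N + 2) => α ∘ π) f ∈ Pu K N S := by
  intro f hf
  have h1 : rename (fun α : T → Fin (N + 2) => α ∘ π) f ∈
      Ideal.map (rename (fun α : T → Fin (N + 2) => α ∘ π)
        : MvPolynomial (T → Fin (N+2)) K →ₐ[K] MvPolynomial (S → Fin (N+2)) K)
        (Pu K N T) := Ideal.mem_map_of_mem _ hf
  rw [Pu, Ideal.map_span] at h1
  refine Ideal.span_le.mpr ?_ h1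
  rintro g ⟨h, ⟨j, hj, σ, rfl⟩, rfl⟩
  refine Ideal.subset_span ⟨j, hj, σ ∘ π, ?_⟩
  simp only [AlgHom.coe_coe, rename_rename]
  rfl

/-- `u_k ∈ Pu([k])`. -/
lemma u_mem (K : Type) [Field K] (N : ℕ) (k : ℕ) (hk : 2 ≤ k) :
    uMonomial K N k ∈ Pu K N (Fin k) := by
  refine Ideal.subset_span ⟨k, hk, id, ?_⟩
  have : (fun α : Fin k → Fin (N + 2) => α ∘ id) = id := rfl
  rw [this, rename_id, AlgHom.id_apply]

/-- A pullback of `u_j` as a single monomial. -/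
lemma rename_u (K : Type) [Field K] (N j : ℕ) {S : Type} (ρ : S → Fin j) :
    rename (fun α : Fin j → Fin (N + 2) => α ∘ ρ) (uMonomial K N j)
      = monomial (∑ i : Fin j, Finsupp.single ((alphaKM (N := N) j i) ∘ ρ) 1) 1 := by
  rw [uMonomial_eq, rename_monomial, Finsupp.mapDomain_finset_sum]
  simp only [Finsupp.mapDomain_single]

/-- Core combinatorial lemma: if the exponent of `ρ*(u_j)` divides (is dominated
by) the exponent of `u_k`, then `ρ` is injective. -/
lemma rho_injective {N k j : ℕ} (ρ : Fin k → Fin j)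
    (h : (∑ i : Fin j, Finsupp.single ((alphaKM (N := N) j i) ∘ ρ) 1) ≤
      ∑ i : Fin k, Finsupp.single (alphaKM (N := N) k i) 1) :
    Function.Injective ρ := by
  intro a b hab
  set m := ρ a with hm
  have h1 : 1 ≤ (∑ i : Fin j, Finsupp.single ((alphaKM (N := N) j i) ∘ ρ) 1)
      ((alphaKM (N := N) j m) ∘ ρ) := by
    rw [Finsupp.finset_sum_apply]
    refine Finset.single_le_sum (f := fun i => (Finsupp.single ((alphaKM (N := N) j i) ∘ ρ) 1)
      ((alphaKM (N := N) j m) ∘ ρ)) (fun _ _ => Nat.zero_le _) (Finset.mem_univ m) |>.trans' ?_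
    simp
  have h2 : 1 ≤ (∑ i : Fin k, Finsupp.single (alphaKM (N := N) k i) 1)
      ((alphaKM (N := N) j m) ∘ ρ) := le_trans h1 (h _)
  rw [Finsupp.finset_sum_apply] at h2
  have h3 : ∃ i : Fin k, (Finsupp.single (alphaKM (N := N) k i) 1)
      ((alphaKM (N := N) j m) ∘ ρ) ≠ 0 := by
    by_contra hc
    push_neg at hc
    simp only [Finset.sum_congr rfl (fun i _ => hc i), Finset.sum_const_zero] at h2
    omega
  obtain ⟨i, hi⟩ := h3
  have h4 : alphaKM (N := N) k i = (alphaKM (N := N) j m) ∘ ρ := by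
    by_contra hc
    rw [Finsupp.single_apply, if_neg hc] at hi
    exact hi rfl
  have ha : a = i := by
    have := congrFun h4 a
    simp only [alphaKM, Function.comp_apply, ← hm, if_pos rfl] at this
    by_contra hc
    rw [if_neg hc] at this
    exact one_ne_zero this.symm
  have hb : b = i := by
    have := congrFun h4 b
    simp only [alphaKM, Function.comp_apply, ← hab, ← hm, if_pos rfl] at this
    by_contra hc
    rw [if_neg hc] at this
    exact one_ne_zero this.symm
  rw [ha, hb]

/-- For `n ≥ 2`, the `Fin^op`-algebra `A_n` is not Noetherian: the assignment
`P = Pu` is stable under pullbacks and contains `u_k` for all `k ≥ 2`, but there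
are no finitely many finite sets `S_1,…,S_N` and elements `f_m ∈ P(S_m)` whose
pullbacks generate every `P(S)`. -/
theorem An_not_noetherian (K : Type) [Field K] (N : ℕ) :
    (∀ (S T : Type) (π : S → T), ∀ f ∈ Pu K N T,
        rename (fun α : T → Fin (N + 2) => α ∘ π) f ∈ Pu K N S) ∧
    (∀ k : ℕ, 2 ≤ k → uMonomial K N k ∈ Pu K N (Fin k)) ∧
    ¬ ∃ (M : ℕ) (Sm : Fin M → Type) (_ : (m : Fin M) → Fintype (Sm m))
        (f : (m : Fin M) → MvPolynomial (Sm m → Fin (N + 2)) K),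
        (∀ m : Fin M, f m ∈ Pu K N (Sm m)) ∧
        ∀ (S : Type) [Fintype S],
          Pu K N S = Ideal.span {g | ∃ (m : Fin M) (π : S → Sm m),
            g = rename (fun α : Sm m → Fin (N + 2) => α ∘ π) (f m)} := by
  refine ⟨pullback_mem K N, u_mem K N, ?_⟩
  rintro ⟨M, Sm, inst, f, hf, hgen⟩
  haveI : ∀ m, Fintype (Sm m) := inst
  set B := Finset.univ.sup (fun m : Fin M => Fintype.card (Sm m)) with hB
  set k := B + 2 with hkdef
  -- the relevant set of exponents
  set E : Set ((Fin k → Fin (N + 2)) →₀ ℕ) :=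
    {d | ∃ (j : ℕ) (m : Fin M) (π : Fin k → Sm m) (σ : Sm m → Fin j),
      d = ∑ i : Fin j, Finsupp.single ((alphaKM (N := N) j i) ∘ (σ ∘ π)) 1} with hE
  have key1 : uMonomial K N k ∈ Ideal.span ((fun d => monomial d (1 : K)) '' E) := by
    have h0 := u_mem K N k (by omega)
    rw [hgen (Fin k)] at h0
    refine Ideal.span_le.mpr ?_ h0
    rintro g ⟨m, π, rfl⟩
    have h1 : rename (fun α : Sm m → Fin (N + 2) => α ∘ π) (f m) ∈
        Ideal.map (rename (fun α : Sm m → Fin (N + 2) => α ∘ π)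
          : MvPolynomial (Sm m → Fin (N+2)) K →ₐ[K] MvPolynomial (Fin k → Fin (N+2)) K)
          (Pu K N (Sm m)) := Ideal.mem_map_of_mem _ (hf m)
    rw [Pu, Ideal.map_span] at h1
    refine Ideal.span_le.mpr ?_ h1
    rintro g ⟨h, ⟨j, hj, σ, rfl⟩, rfl⟩
    refine Ideal.subset_span
      ⟨∑ i : Fin j, Finsupp.single ((alphaKM (N := N) j i) ∘ (σ ∘ π)) 1,
        ⟨j, m, π, σ, rfl⟩, ?_⟩
    show _ = rename _ (rename _ _)
    rw [rename_rename]
    exact (rename_u K N j (σ ∘ π)).symm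
  rw [uMonomial_eq, mem_ideal_span_monomial_image] at key1
  obtain ⟨e, he, hle⟩ := key1 (∑ i : Fin k, Finsupp.single (alphaKM (N := N) k i) 1)
    (by simp [support_monomial])
  obtain ⟨j, m, π, σ, rfl⟩ := he
  have hinj : Function.Injective (σ ∘ π) := rho_injective (σ ∘ π) hle
  have hπ : Function.Injective π := fun a b hab => hinj (by simp [Function.comp, hab])
  have hcard : k ≤ Fintype.card (Sm m) := by
    simpa using Fintype.card_le_of_injective π hπ
  have h2 : Fintype.card (Sm m) ≤ B :=
    Finset.le_sup (f := fun m : Fin M => Fintype.card (Sm m)) (Finset.mem_univ m)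
  omega
end

section
/- Let G_1 = (N_1, E_1) and G_2 = (N_2, E_2) be finite simple graphs with N_1 ∩ N_2 = N_0 such that G_1 and G_2 induce the same graph H on N_0, with d_j ∈ ℕ_{≥1} states at each node j ∈ N_1 ∪ N_2, and let G = G_1 +_H G_2 be the graph on node set N_1 ∪ N_2 with edge set E_1 ∪ E_2. Then the image of φ_G equals the set { (β ↦ u(β|_{N_1}) · v(β|_{N_2}))_{β ∈ ∏_{j∈N_1∪N_2}[d_j]} : u ∈ im φ_{G_1}, v ∈ im φ_{G_2} }, where β|_{N_i} denotes the restriction of β to N_i. In particular, the graphical model X_G is the toric fibre product X_{G_1} * X_{G_2}. -/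
/-- The set of maximal cliques of a finite simple graph, as a `Finset` of
`Finset`s of vertices. -/
noncomputable def mcl {V : Type*} [Fintype V] (G : SimpleGraph V) :
    Finset (Finset V) := by
  classical exact Finset.univ.filter fun C => Maximal G.IsClique (↑C : Set V)

/-- The parameterisation `φ_G` of the graphical model of `G` with `d j` states at
node `j`: `φ_G(θ)(β) = ∏_{C ∈ mcl(G)} θ^C_{β|_C}`. -/
noncomputable def phiG {V : Type*} [Fintype V] (G : SimpleGraph V) (d : V → ℕ)
    (θ : (C : Finset V) → ((j : {x // x ∈ C}) → Fin (d j)) → ℂ) :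
    ((j : V) → Fin (d j)) → ℂ :=
  fun β => ∏ C ∈ mcl G, θ C (fun j => β j)

/-- The Zariski closure of a set of points in `K^ι`. -/
def zariskiClosure {K : Type*} [Field K] {ι : Type*} (Z : Set (ι → K)) :
    Set (ι → K) :=
  MvPolynomial.zeroLocus K (MvPolynomial.vanishingIdeal K Z)

lemma subset_zariskiClosure {K : Type*} [Field K] {ι : Type*} (Z : Set (ι → K)) :
    Z ⊆ zariskiClosure Z :=
  MvPolynomial.zeroLocus_vanishingIdeal_le (k := K) Z

lemma zariskiClosure_mono {K : Type*} [Field K] {ι : Type*} {A B : Set (ι → K)}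
    (h : A ⊆ B) : zariskiClosure A ⊆ zariskiClosure B :=
  MvPolynomial.zeroLocus_anti_mono (MvPolynomial.vanishingIdeal_anti_mono h)

lemma zariskiClosure_idem {K : Type*} [Field K] {ι : Type*} (A : Set (ι → K)) :
    zariskiClosure (zariskiClosure A) = zariskiClosure A := by
  refine subset_antisymm ?_ (subset_zariskiClosure _)
  exact MvPolynomial.zeroLocus_anti_mono
    (MvPolynomial.le_vanishingIdeal_zeroLocus (K := K) (MvPolynomial.vanishingIdeal K A))

lemma aeval_eq_eval {K : Type*} [Field K] {ι : Type*} (f : ι → K)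
    (q : MvPolynomial ι K) : MvPolynomial.aeval f q = MvPolynomial.eval f q := by
  rw [← MvPolynomial.coe_aeval_eq_eval]
  rfl

lemma eval_bind₁' {K : Type*} [Field K] {ι τ : Type*} (f : τ → K)
    (g : ι → MvPolynomial τ K) (p : MvPolynomial ι K) :
    MvPolynomial.eval f (MvPolynomial.bind₁ g p) =
      MvPolynomial.eval (fun i => MvPolynomial.eval f (g i)) p := by
  rw [← aeval_eq_eval, MvPolynomial.aeval_bind₁]
  simp only [aeval_eq_eval]

lemma prodmap_mem_zariskiClosure {K : Type*} [Field K] {ι ι₁ ι₂ : Type*}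
    (r₁ : ι → ι₁) (r₂ : ι → ι₂) (R₁ : Set (ι₁ → K)) (R₂ : Set (ι₂ → K))
    {u : ι₁ → K} {v : ι₂ → K}
    (hu : u ∈ zariskiClosure R₁) (hv : v ∈ zariskiClosure R₂) :
    (fun β => u (r₁ β) * v (r₂ β)) ∈ zariskiClosure
      {F | ∃ u' ∈ R₁, ∃ v' ∈ R₂, F = fun β => u' (r₁ β) * v' (r₂ β)} := by
  rw [zariskiClosure, MvPolynomial.mem_zeroLocus_iff]
  intro p hp
  rw [aeval_eq_eval]
  rw [MvPolynomial.mem_vanishingIdeal_iff] at hp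
  simp only [aeval_eq_eval] at hp
  have key1 : ∀ v' ∈ R₂, MvPolynomial.eval (fun β => u (r₁ β) * v' (r₂ β)) p = 0 := by
    intro v' hv'
    have hq : (MvPolynomial.bind₁
        (fun β => MvPolynomial.X (r₁ β) * MvPolynomial.C (v' (r₂ β))) p) ∈
        MvPolynomial.vanishingIdeal K R₁ := by
      rw [MvPolynomial.mem_vanishingIdeal_iff]
      intro u' hu'
      rw [aeval_eq_eval, eval_bind₁']
      have he : (fun i => MvPolynomial.eval u'
          (MvPolynomial.X (r₁ i) * MvPolynomial.C (v' (r₂ i)))) =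
          fun i => u' (r₁ i) * v' (r₂ i) := by
        funext i; simp
      rw [he]
      exact hp _ ⟨u', hu', v', hv', rfl⟩
    have h0 := hu _ hq
    rw [aeval_eq_eval, eval_bind₁'] at h0
    have he : (fun i => MvPolynomial.eval u
        (MvPolynomial.X (r₁ i) * MvPolynomial.C (v' (r₂ i)))) =
        fun i => u (r₁ i) * v' (r₂ i) := by
      funext i; simp
    rwa [he] at h0
  have hq₂ : (MvPolynomial.bind₁
      (fun β => MvPolynomial.C (u (r₁ β)) * MvPolynomial.X (r₂ β)) p) ∈
      MvPolynomial.vanishingIdeal K R₂ := by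
    rw [MvPolynomial.mem_vanishingIdeal_iff]
    intro v' hv'
    rw [aeval_eq_eval, eval_bind₁']
    have he : (fun i => MvPolynomial.eval v'
        (MvPolynomial.C (u (r₁ i)) * MvPolynomial.X (r₂ i))) =
        fun i => u (r₁ i) * v' (r₂ i) := by
      funext i; simp
    rw [he]
    exact key1 v' hv'
  have h0 := hv _ hq₂
  rw [aeval_eq_eval, eval_bind₁'] at h0
  have he : (fun i => MvPolynomial.eval v
      (MvPolynomial.C (u (r₁ i)) * MvPolynomial.X (r₂ i))) =
      fun i => u (r₁ i) * v (r₂ i) := by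
    funext i; simp
  rwa [he] at h0

lemma tfp_closure_eq {K : Type*} [Field K] {ι ι₁ ι₂ : Type*}
    (r₁ : ι → ι₁) (r₂ : ι → ι₂) (R₁ : Set (ι₁ → K)) (R₂ : Set (ι₂ → K)) :
    zariskiClosure {F | ∃ u ∈ R₁, ∃ v ∈ R₂, F = fun β => u (r₁ β) * v (r₂ β)} =
    zariskiClosure {F | ∃ u ∈ zariskiClosure R₁, ∃ v ∈ zariskiClosure R₂,
      F = fun β => u (r₁ β) * v (r₂ β)} := by
  refine subset_antisymm (zariskiClosure_mono ?_) ?_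
  · rintro F ⟨u, hu, v, hv, rfl⟩
    exact ⟨u, subset_zariskiClosure _ hu, v, subset_zariskiClosure _ hv, rfl⟩
  · have h : {F : ι → K | ∃ u ∈ zariskiClosure R₁, ∃ v ∈ zariskiClosure R₂,
        F = fun β => u (r₁ β) * v (r₂ β)} ⊆
        zariskiClosure {F | ∃ u ∈ R₁, ∃ v ∈ R₂, F = fun β => u (r₁ β) * v (r₂ β)} := by
      rintro F ⟨u, hu, v, hv, rfl⟩
      exact prodmap_mem_zariskiClosure r₁ r₂ R₁ R₂ hu hv
    calc zariskiClosure {F : ι → K | ∃ u ∈ zariskiClosure R₁, ∃ v ∈ zariskiClosure R₂,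
            F = fun β => u (r₁ β) * v (r₂ β)}
        ⊆ zariskiClosure (zariskiClosure
            {F | ∃ u ∈ R₁, ∃ v ∈ R₂, F = fun β => u (r₁ β) * v (r₂ β)}) :=
          zariskiClosure_mono h
      _ = _ := zariskiClosure_idem _

lemma mem_mcl {V : Type*} [Fintype V] {G : SimpleGraph V} {C : Finset V} :
    C ∈ mcl G ↔ Maximal G.IsClique (↑C : Set V) := by
  simp [mcl]

lemma exists_mcl_superset {V : Type*} [Fintype V] {G : SimpleGraph V} (s : Finset V)
    (hs : G.IsClique (↑s : Set V)) : ∃ C ∈ mcl G, s ⊆ C := by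
  classical
  obtain ⟨t, hst, hmax⟩ := Finite.exists_le_maximal (p := G.IsClique) hs
  have hft : t.Finite := Set.toFinite t
  refine ⟨hft.toFinset, ?_, ?_⟩
  · rw [mem_mcl, Set.Finite.coe_toFinset]
    exact hmax
  · intro x hx
    rw [Set.Finite.mem_toFinset]
    exact hst hx


section Glue

variable {N₀ M₁ M₂ : Type*}

/-- The relation on `N₀ ⊕ (M₁ ⊕ M₂)` inducing the edge set `E₁ ∪ E₂` of the glued
graph `G₁ +_H G₂` of two graphs `G₁, G₂` on `N₀ ⊕ M₁` resp. `N₀ ⊕ M₂`. -/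
def gluedRel (G₁ : SimpleGraph (N₀ ⊕ M₁)) (G₂ : SimpleGraph (N₀ ⊕ M₂)) :
    N₀ ⊕ (M₁ ⊕ M₂) → N₀ ⊕ (M₁ ⊕ M₂) → Prop
  | Sum.inl u, Sum.inl v =>
      G₁.Adj (Sum.inl u) (Sum.inl v) ∨ G₂.Adj (Sum.inl u) (Sum.inl v)
  | Sum.inl u, Sum.inr (Sum.inl m) => G₁.Adj (Sum.inl u) (Sum.inr m)
  | Sum.inl u, Sum.inr (Sum.inr m) => G₂.Adj (Sum.inl u) (Sum.inr m)
  | Sum.inr (Sum.inl m), Sum.inl v => G₁.Adj (Sum.inr m) (Sum.inl v)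
  | Sum.inr (Sum.inr m), Sum.inl v => G₂.Adj (Sum.inr m) (Sum.inl v)
  | Sum.inr (Sum.inl m), Sum.inr (Sum.inl m') => G₁.Adj (Sum.inr m) (Sum.inr m')
  | Sum.inr (Sum.inr m), Sum.inr (Sum.inr m') => G₂.Adj (Sum.inr m) (Sum.inr m')
  | _, _ => False

/-- The glued graph `G = G₁ +_H G₂` on node set `N₁ ∪ N₂ = N₀ ⊕ (M₁ ⊕ M₂)`, with
edge set `E₁ ∪ E₂`. -/
def glued2 (G₁ : SimpleGraph (N₀ ⊕ M₁)) (G₂ : SimpleGraph (N₀ ⊕ M₂)) :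
    SimpleGraph (N₀ ⊕ (M₁ ⊕ M₂)) :=
  SimpleGraph.fromRel (gluedRel G₁ G₂)

variable (d₀ : N₀ → ℕ) (d₁ : M₁ → ℕ) (d₂ : M₂ → ℕ)

/-- Restriction `β ↦ β|_{N₁}` of a joint configuration of the glued graph to the
nodes of `G₁`. -/
def res₁ (β : (j : N₀ ⊕ (M₁ ⊕ M₂)) → Fin (Sum.elim d₀ (Sum.elim d₁ d₂) j)) :
    (j : N₀ ⊕ M₁) → Fin (Sum.elim d₀ d₁ j)
  | Sum.inl u => β (Sum.inl u)
  | Sum.inr m => β (Sum.inr (Sum.inl m))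

/-- Restriction `β ↦ β|_{N₂}` of a joint configuration of the glued graph to the
nodes of `G₂`. -/
def res₂ (β : (j : N₀ ⊕ (M₁ ⊕ M₂)) → Fin (Sum.elim d₀ (Sum.elim d₁ d₂) j)) :
    (j : N₀ ⊕ M₂) → Fin (Sum.elim d₀ d₂ j)
  | Sum.inl u => β (Sum.inl u)
  | Sum.inr m => β (Sum.inr (Sum.inr m))

section MyAux

def toV₁ : N₀ ⊕ M₁ → N₀ ⊕ (M₁ ⊕ M₂) := Sum.map id Sum.inl

def toV₂ : N₀ ⊕ M₂ → N₀ ⊕ (M₁ ⊕ M₂) := Sum.map id Sum.inr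

lemma toV₁_inj : Function.Injective (toV₁ : N₀ ⊕ M₁ → N₀ ⊕ (M₁ ⊕ M₂)) := by
  intro a b h
  cases a <;> cases b <;> simp [toV₁] at h <;> simp [h]

lemma toV₂_inj : Function.Injective (toV₂ : N₀ ⊕ M₂ → N₀ ⊕ (M₁ ⊕ M₂)) := by
  intro a b h
  cases a <;> cases b <;> simp [toV₂] at h <;> simp [h]

variable {G₁ : SimpleGraph (N₀ ⊕ M₁)} {G₂ : SimpleGraph (N₀ ⊕ M₂)}

lemma glued_adj₁
    (hind : ∀ u v : N₀, G₁.Adj (Sum.inl u) (Sum.inl v) ↔ G₂.Adj (Sum.inl u) (Sum.inl v))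
    (a b : N₀ ⊕ M₁) :
    (glued2 G₁ G₂).Adj (toV₁ a) (toV₁ b) ↔ G₁.Adj a b := by
  cases a <;> cases b <;>
    simp only [glued2, SimpleGraph.fromRel_adj, gluedRel, toV₁, Sum.map_inl, Sum.map_inr,
      id_eq, or_false, false_or]
  case inl.inl u v =>
    constructor
    · rintro ⟨-, (h | h) | (h | h)⟩
      · exact h
      · exact (hind _ _).mpr h
      · exact h.symm
      · exact ((hind _ _).mpr h).symm
    · intro h
      exact ⟨fun e => h.ne (by simpa using e), Or.inl (Or.inl h)⟩
  case inl.inr u m =>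
    constructor
    · rintro ⟨-, h | h⟩
      · exact h
      · exact h.symm
    · intro h
      exact ⟨fun e => by simp at e, Or.inl h⟩
  case inr.inl m v =>
    constructor
    · rintro ⟨-, h | h⟩
      · exact h
      · exact h.symm
    · intro h
      exact ⟨fun e => by simp at e, Or.inl h⟩
  case inr.inr m m' =>
    constructor
    · rintro ⟨-, h | h⟩
      · exact h
      · exact h.symm
    · intro h
      exact ⟨fun e => h.ne (by simpa using e), Or.inl h⟩

lemma glued_adj₂
    (hind : ∀ u v : N₀, G₁.Adj (Sum.inl u) (Sum.inl v) ↔ G₂.Adj (Sum.inl u) (Sum.inl v))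
    (a b : N₀ ⊕ M₂) :
    (glued2 G₁ G₂).Adj (toV₂ a) (toV₂ b) ↔ G₂.Adj a b := by
  cases a <;> cases b <;>
    simp only [glued2, SimpleGraph.fromRel_adj, gluedRel, toV₂, Sum.map_inl, Sum.map_inr,
      id_eq, or_false, false_or]
  case inl.inl u v =>
    constructor
    · rintro ⟨-, (h | h) | (h | h)⟩
      · exact (hind _ _).mp h
      · exact h
      · exact ((hind _ _).mp h).symm
      · exact h.symm
    · intro h
      exact ⟨fun e => h.ne (by simpa using e), Or.inl (Or.inr h)⟩
  case inl.inr u m =>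
    constructor
    · rintro ⟨-, h | h⟩
      · exact h
      · exact h.symm
    · intro h
      exact ⟨fun e => by simp at e, Or.inl h⟩
  case inr.inl m v =>
    constructor
    · rintro ⟨-, h | h⟩
      · exact h
      · exact h.symm
    · intro h
      exact ⟨fun e => by simp at e, Or.inl h⟩
  case inr.inr m m' =>
    constructor
    · rintro ⟨-, h | h⟩
      · exact h
      · exact h.symm
    · intro h
      exact ⟨fun e => h.ne (by simpa using e), Or.inl h⟩

lemma not_adj_cross (m₁ : M₁) (m₂ : M₂) :
    ¬ (glued2 G₁ G₂).Adj (Sum.inr (Sum.inl m₁)) (Sum.inr (Sum.inr m₂)) := by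
  simp [glued2, SimpleGraph.fromRel_adj, gluedRel]

/-- Every clique of the glued graph lies in the image of `toV₁` or of `toV₂`. -/
lemma clique_sub {s : Set (N₀ ⊕ (M₁ ⊕ M₂))} (hs : (glued2 G₁ G₂).IsClique s) :
    (∀ j ∈ s, ∃ a : N₀ ⊕ M₁, toV₁ a = j) ∨ (∀ j ∈ s, ∃ a : N₀ ⊕ M₂, toV₂ a = j) := by
  by_cases h1 : ∃ m₁ : M₁, Sum.inr (Sum.inl m₁) ∈ s
  · left
    obtain ⟨m₁, hm₁⟩ := h1
    rintro (u | m | m) hj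
    · exact ⟨Sum.inl u, rfl⟩
    · exact ⟨Sum.inr m, rfl⟩
    · exfalso
      have hne : (Sum.inr (Sum.inl m₁) : N₀ ⊕ (M₁ ⊕ M₂)) ≠ Sum.inr (Sum.inr m) := by simp
      exact not_adj_cross m₁ m (hs hm₁ hj hne)
  · right
    rintro (u | m | m) hj
    · exact ⟨Sum.inl u, rfl⟩
    · exact absurd ⟨m, hj⟩ h1
    · exact ⟨Sum.inr m, rfl⟩

lemma clique_image₁
    (hind : ∀ u v : N₀, G₁.Adj (Sum.inl u) (Sum.inl v) ↔ G₂.Adj (Sum.inl u) (Sum.inl v))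
    {s : Set (N₀ ⊕ M₁)} :
    (glued2 G₁ G₂).IsClique (toV₁ '' s) ↔ G₁.IsClique s := by
  constructor
  · intro h a ha b hb hab
    exact (glued_adj₁ hind a b).mp
      (h (Set.mem_image_of_mem _ ha) (Set.mem_image_of_mem _ hb) (fun e => hab (toV₁_inj e)))
  · rintro h j ⟨a, ha, rfl⟩ j' ⟨b, hb, rfl⟩ hne
    exact (glued_adj₁ hind a b).mpr (h ha hb (fun e => hne (congrArg toV₁ e)))

lemma clique_image₂
    (hind : ∀ u v : N₀, G₁.Adj (Sum.inl u) (Sum.inl v) ↔ G₂.Adj (Sum.inl u) (Sum.inl v))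
    {s : Set (N₀ ⊕ M₂)} :
    (glued2 G₁ G₂).IsClique (toV₂ '' s) ↔ G₂.IsClique s := by
  constructor
  · intro h a ha b hb hab
    exact (glued_adj₂ hind a b).mp
      (h (Set.mem_image_of_mem _ ha) (Set.mem_image_of_mem _ hb) (fun e => hab (toV₂_inj e)))
  · rintro h j ⟨a, ha, rfl⟩ j' ⟨b, hb, rfl⟩ hne
    exact (glued_adj₂ hind a b).mpr (h ha hb (fun e => hne (congrArg toV₂ e)))

variable [Fintype N₀] [Fintype M₁] [Fintype M₂]

open scoped Classical

lemma mcl_restrict₁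
    (hind : ∀ u v : N₀, G₁.Adj (Sum.inl u) (Sum.inl v) ↔ G₂.Adj (Sum.inl u) (Sum.inl v))
    {C : Finset (N₀ ⊕ (M₁ ⊕ M₂))} (hC : C ∈ mcl (glued2 G₁ G₂))
    (hsub : ∀ j ∈ C, ∃ a : N₀ ⊕ M₁, toV₁ a = j) :
    ∃ D ∈ mcl G₁, D.image toV₁ = C := by
  classical
  have hmax := mem_mcl.mp hC
  set D := C.preimage toV₁ (toV₁_inj.injOn) with hD
  have himg : D.image toV₁ = C := by
    rw [hD, Finset.image_preimage]
    exact Finset.filter_true_of_mem fun x hx => Set.mem_range.mpr (hsub x hx)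
  have hcoe : toV₁ '' (↑D : Set (N₀ ⊕ M₁)) = (↑C : Set (N₀ ⊕ (M₁ ⊕ M₂))) := by
    rw [← Finset.coe_image, himg]
  have hclD : G₁.IsClique (↑D : Set (N₀ ⊕ M₁)) := by
    rw [← clique_image₁ hind (s := (↑D : Set (N₀ ⊕ M₁))), hcoe]
    exact hmax.1
  refine ⟨D, mem_mcl.mpr ⟨hclD, ?_⟩, himg⟩
  intro t ht hDt
  have h2 : (↑C : Set (N₀ ⊕ (M₁ ⊕ M₂))) ⊆ toV₁ '' t := by
    rw [← hcoe]
    exact Set.image_mono hDt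
  have h3 := hmax.2 ((clique_image₁ hind).mpr ht) h2
  rw [← hcoe] at h3
  exact (Set.image_subset_image_iff toV₁_inj).mp h3

lemma mcl_restrict₂
    (hind : ∀ u v : N₀, G₁.Adj (Sum.inl u) (Sum.inl v) ↔ G₂.Adj (Sum.inl u) (Sum.inl v))
    {C : Finset (N₀ ⊕ (M₁ ⊕ M₂))} (hC : C ∈ mcl (glued2 G₁ G₂))
    (hsub : ∀ j ∈ C, ∃ a : N₀ ⊕ M₂, toV₂ a = j) :
    ∃ D ∈ mcl G₂, D.image toV₂ = C := by
  classical
  have hmax := mem_mcl.mp hC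
  set D := C.preimage toV₂ (toV₂_inj.injOn) with hD
  have himg : D.image toV₂ = C := by
    rw [hD, Finset.image_preimage]
    exact Finset.filter_true_of_mem fun x hx => Set.mem_range.mpr (hsub x hx)
  have hcoe : toV₂ '' (↑D : Set (N₀ ⊕ M₂)) = (↑C : Set (N₀ ⊕ (M₁ ⊕ M₂))) := by
    rw [← Finset.coe_image, himg]
  have hclD : G₂.IsClique (↑D : Set (N₀ ⊕ M₂)) := by
    rw [← clique_image₂ hind (s := (↑D : Set (N₀ ⊕ M₂))), hcoe]
    exact hmax.1
  refine ⟨D, mem_mcl.mpr ⟨hclD, ?_⟩, himg⟩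
  intro t ht hDt
  have h2 : (↑C : Set (N₀ ⊕ (M₁ ⊕ M₂))) ⊆ toV₂ '' t := by
    rw [← hcoe]
    exact Set.image_mono hDt
  have h3 := hmax.2 ((clique_image₂ hind).mpr ht) h2
  rw [← hcoe] at h3
  exact (Set.image_subset_image_iff toV₂_inj).mp h3

lemma d_toV₁ (a : N₀ ⊕ M₁) :
    Sum.elim d₀ (Sum.elim d₁ d₂) (toV₁ a) = Sum.elim d₀ d₁ a := by
  cases a <;> rfl

lemma d_toV₂ (a : N₀ ⊕ M₂) :
    Sum.elim d₀ (Sum.elim d₁ d₂) (toV₂ a) = Sum.elim d₀ d₂ a := by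
  cases a <;> rfl

lemma res₁_eq (β : (j : N₀ ⊕ (M₁ ⊕ M₂)) → Fin (Sum.elim d₀ (Sum.elim d₁ d₂) j))
    (a : N₀ ⊕ M₁) :
    res₁ d₀ d₁ d₂ β a = Fin.cast (d_toV₁ d₀ d₁ d₂ a) (β (toV₁ a)) := by
  cases a <;> rfl

lemma res₂_eq (β : (j : N₀ ⊕ (M₁ ⊕ M₂)) → Fin (Sum.elim d₀ (Sum.elim d₁ d₂) j))
    (a : N₀ ⊕ M₂) :
    res₂ d₀ d₁ d₂ β a = Fin.cast (d_toV₂ d₀ d₁ d₂ a) (β (toV₂ a)) := by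
  cases a <;> rfl

/-- Transport a local configuration on `D` to one on `D.image toV₁`. -/
noncomputable def up₁ (D : Finset (N₀ ⊕ M₁))
    (α : (a : {x // x ∈ D}) → Fin (Sum.elim d₀ d₁ a.1)) :
    (j : {x // x ∈ D.image (toV₁ (M₂ := M₂))}) → Fin (Sum.elim d₀ (Sum.elim d₁ d₂) j.1) :=
  fun j =>
    Fin.cast
      ((d_toV₁ d₀ d₁ d₂ _).symm.trans
        (congrArg (Sum.elim d₀ (Sum.elim d₁ d₂)) (Finset.mem_image.mp j.2).choose_spec.2))
      (α ⟨(Finset.mem_image.mp j.2).choose, (Finset.mem_image.mp j.2).choose_spec.1⟩)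

noncomputable def up₂ (D : Finset (N₀ ⊕ M₂))
    (α : (a : {x // x ∈ D}) → Fin (Sum.elim d₀ d₂ a.1)) :
    (j : {x // x ∈ D.image (toV₂ (M₁ := M₁))}) → Fin (Sum.elim d₀ (Sum.elim d₁ d₂) j.1) :=
  fun j =>
    Fin.cast
      ((d_toV₂ d₀ d₁ d₂ _).symm.trans
        (congrArg (Sum.elim d₀ (Sum.elim d₁ d₂)) (Finset.mem_image.mp j.2).choose_spec.2))
      (α ⟨(Finset.mem_image.mp j.2).choose, (Finset.mem_image.mp j.2).choose_spec.1⟩)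

lemma up₁_res (D : Finset (N₀ ⊕ M₁))
    (β : (j : N₀ ⊕ (M₁ ⊕ M₂)) → Fin (Sum.elim d₀ (Sum.elim d₁ d₂) j)) :
    up₁ d₀ d₁ d₂ D (fun a : {x // x ∈ D} => res₁ d₀ d₁ d₂ β a.1) =
      fun j : {x // x ∈ D.image (toV₁ (M₂ := M₂))} => β j.1 := by
  funext j
  have hc2 := (Finset.mem_image.mp j.2).choose_spec.2
  apply Fin.ext
  simp only [up₁, Fin.coe_cast, res₁_eq]
  exact congrArg (fun t => (β t).val) hc2

lemma up₂_res (D : Finset (N₀ ⊕ M₂))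
    (β : (j : N₀ ⊕ (M₁ ⊕ M₂)) → Fin (Sum.elim d₀ (Sum.elim d₁ d₂) j)) :
    up₂ d₀ d₁ d₂ D (fun a : {x // x ∈ D} => res₂ d₀ d₁ d₂ β a.1) =
      fun j : {x // x ∈ D.image (toV₂ (M₁ := M₁))} => β j.1 := by
  funext j
  have hc2 := (Finset.mem_image.mp j.2).choose_spec.2
  apply Fin.ext
  simp only [up₂, Fin.coe_cast, res₂_eq]
  exact congrArg (fun t => (β t).val) hc2

theorem part1
    (hind : ∀ u v : N₀, G₁.Adj (Sum.inl u) (Sum.inl v) ↔ G₂.Adj (Sum.inl u) (Sum.inl v)) :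
    Set.range (phiG (glued2 G₁ G₂) (Sum.elim d₀ (Sum.elim d₁ d₂))) =
      {F | ∃ u ∈ Set.range (phiG G₁ (Sum.elim d₀ d₁)),
           ∃ v ∈ Set.range (phiG G₂ (Sum.elim d₀ d₂)),
           F = fun β => u (res₁ d₀ d₁ d₂ β) * v (res₂ d₀ d₁ d₂ β)} := by
  classical
  ext F
  constructor
  · rintro ⟨θ, rfl⟩
    set P : Finset (N₀ ⊕ (M₁ ⊕ M₂)) → Prop :=
      fun C => ∀ j ∈ C, ∃ a : N₀ ⊕ M₁, toV₁ a = j with hPdef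
    set θ₁ : (D : Finset (N₀ ⊕ M₁)) → ((a : {x // x ∈ D}) → Fin (Sum.elim d₀ d₁ a.1)) → ℂ :=
      fun D α =>
        if h : D.image toV₁ ∈ mcl (glued2 G₁ G₂) ∧ P (D.image toV₁) then
          θ (D.image toV₁) (up₁ d₀ d₁ d₂ D α)
        else 1 with hθ₁
    set θ₂ : (D : Finset (N₀ ⊕ M₂)) → ((a : {x // x ∈ D}) → Fin (Sum.elim d₀ d₂ a.1)) → ℂ :=
      fun D α =>
        if h : D.image toV₂ ∈ mcl (glued2 G₁ G₂) ∧ ¬ P (D.image toV₂) then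
          θ (D.image toV₂) (up₂ d₀ d₁ d₂ D α)
        else 1 with hθ₂
    refine ⟨phiG G₁ (Sum.elim d₀ d₁) θ₁, ⟨θ₁, rfl⟩,
      phiG G₂ (Sum.elim d₀ d₂) θ₂, ⟨θ₂, rfl⟩, funext fun β => ?_⟩
    have claimA : phiG G₁ (Sum.elim d₀ d₁) θ₁ (res₁ d₀ d₁ d₂ β)
        = ∏ C ∈ (mcl (glued2 G₁ G₂)).filter P, θ C (fun j => β j) := by
      show (∏ D ∈ mcl G₁, θ₁ D (fun a => res₁ d₀ d₁ d₂ β a)) = _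
      rw [← Finset.prod_filter_mul_prod_filter_not (mcl G₁)
        (fun D => D.image toV₁ ∈ mcl (glued2 G₁ G₂) ∧ P (D.image toV₁))]
      have h2 : (∏ D ∈ (mcl G₁).filter
          (fun D => ¬(D.image toV₁ ∈ mcl (glued2 G₁ G₂) ∧ P (D.image toV₁))),
          θ₁ D (fun a => res₁ d₀ d₁ d₂ β a)) = 1 := by
        refine Finset.prod_eq_one fun D hD => ?_
        simp only [hθ₁]
        exact dif_neg (Finset.mem_filter.mp hD).2
      rw [h2, mul_one]
      refine Finset.prod_bij (fun D _ => D.image toV₁) ?_ ?_ ?_ ?_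
      · intro D hD
        obtain ⟨hD1, hq⟩ := Finset.mem_filter.mp hD
        exact Finset.mem_filter.mpr ⟨hq.1, hq.2⟩
      · intro D hD D' hD' h
        exact Finset.image_injective toV₁_inj h
      · intro C hC
        obtain ⟨hC1, hC2⟩ := Finset.mem_filter.mp hC
        obtain ⟨D, hD, hDC⟩ := mcl_restrict₁ hind hC1 hC2
        refine ⟨D, Finset.mem_filter.mpr ⟨hD, ?_⟩, hDC⟩
        rw [hDC]
        exact ⟨hC1, hC2⟩
      · intro D hD
        obtain ⟨hD1, hq⟩ := Finset.mem_filter.mp hD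
        simp only [hθ₁]
        rw [dif_pos hq]
        exact congrArg (θ (D.image toV₁)) (up₁_res d₀ d₁ d₂ D β)
    have claimB : phiG G₂ (Sum.elim d₀ d₂) θ₂ (res₂ d₀ d₁ d₂ β)
        = ∏ C ∈ (mcl (glued2 G₁ G₂)).filter (fun C => ¬ P C), θ C (fun j => β j) := by
      show (∏ D ∈ mcl G₂, θ₂ D (fun a => res₂ d₀ d₁ d₂ β a)) = _
      rw [← Finset.prod_filter_mul_prod_filter_not (mcl G₂)
        (fun D => D.image toV₂ ∈ mcl (glued2 G₁ G₂) ∧ ¬ P (D.image toV₂))]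
      have h2 : (∏ D ∈ (mcl G₂).filter
          (fun D => ¬(D.image toV₂ ∈ mcl (glued2 G₁ G₂) ∧ ¬ P (D.image toV₂))),
          θ₂ D (fun a => res₂ d₀ d₁ d₂ β a)) = 1 := by
        refine Finset.prod_eq_one fun D hD => ?_
        simp only [hθ₂]
        exact dif_neg (Finset.mem_filter.mp hD).2
      rw [h2, mul_one]
      refine Finset.prod_bij (fun D _ => D.image toV₂) ?_ ?_ ?_ ?_
      · intro D hD
        obtain ⟨hD1, hq⟩ := Finset.mem_filter.mp hD
        exact Finset.mem_filter.mpr ⟨hq.1, hq.2⟩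
      · intro D hD D' hD' h
        exact Finset.image_injective toV₂_inj h
      · intro C hC
        obtain ⟨hC1, hC2⟩ := Finset.mem_filter.mp hC
        have hC2' : ∀ j ∈ C, ∃ a : N₀ ⊕ M₂, toV₂ a = j := by
          rcases clique_sub (mem_mcl.mp hC1).1 with h | h
          · exact absurd (fun j hj => h j (by exact_mod_cast hj)) hC2
          · exact fun j hj => h j (by exact_mod_cast hj)
        obtain ⟨D, hD, hDC⟩ := mcl_restrict₂ hind hC1 hC2'
        refine ⟨D, Finset.mem_filter.mpr ⟨hD, ?_⟩, hDC⟩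
        rw [hDC]
        exact ⟨hC1, hC2⟩
      · intro D hD
        obtain ⟨hD1, hq⟩ := Finset.mem_filter.mp hD
        simp only [hθ₂]
        rw [dif_pos hq]
        exact congrArg (θ (D.image toV₂)) (up₂_res d₀ d₁ d₂ D β)
    calc phiG (glued2 G₁ G₂) (Sum.elim d₀ (Sum.elim d₁ d₂)) θ β
        = ∏ C ∈ mcl (glued2 G₁ G₂), θ C (fun j => β j) := rfl
      _ = (∏ C ∈ (mcl (glued2 G₁ G₂)).filter P, θ C (fun j => β j)) *
          ∏ C ∈ (mcl (glued2 G₁ G₂)).filter (fun C => ¬ P C), θ C (fun j => β j) :=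
        (Finset.prod_filter_mul_prod_filter_not _ P _).symm
      _ = _ := by rw [← claimA, ← claimB]
  · rintro ⟨u, ⟨θ₁, rfl⟩, v, ⟨θ₂, rfl⟩, rfl⟩
    haveI : DecidableEq (N₀ ⊕ (M₁ ⊕ M₂)) := Classical.decEq _
    have h₁ : ∀ D : Finset (N₀ ⊕ M₁), ∃ C : Finset (N₀ ⊕ (M₁ ⊕ M₂)),
        D ∈ mcl G₁ → C ∈ mcl (glued2 G₁ G₂) ∧ D.image toV₁ ⊆ C := by
      intro D
      by_cases hD : D ∈ mcl G₁
      · obtain ⟨C, hC, hsub⟩ := exists_mcl_superset (D.image (toV₁ (M₂ := M₂))) (by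
          rw [Finset.coe_image]
          exact (clique_image₁ hind).mpr (mem_mcl.mp hD).1)
        exact ⟨C, fun _ => ⟨hC, hsub⟩⟩
      · exact ⟨∅, fun h => absurd h hD⟩
    have h₂ : ∀ D : Finset (N₀ ⊕ M₂), ∃ C : Finset (N₀ ⊕ (M₁ ⊕ M₂)),
        D ∈ mcl G₂ → C ∈ mcl (glued2 G₁ G₂) ∧ D.image toV₂ ⊆ C := by
      intro D
      by_cases hD : D ∈ mcl G₂
      · obtain ⟨C, hC, hsub⟩ := exists_mcl_superset (D.image (toV₂ (M₁ := M₁))) (by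
          rw [Finset.coe_image]
          exact (clique_image₂ hind).mpr (mem_mcl.mp hD).1)
        exact ⟨C, fun _ => ⟨hC, hsub⟩⟩
      · exact ⟨∅, fun h => absurd h hD⟩
    choose asg₁ hasg₁ using h₁
    choose asg₂ hasg₂ using h₂
    set θ : (C : Finset (N₀ ⊕ (M₁ ⊕ M₂))) →
        ((j : {x // x ∈ C}) → Fin (Sum.elim d₀ (Sum.elim d₁ d₂) j.1)) → ℂ := fun C α =>
      (∏ D ∈ mcl G₁, if h : D ∈ mcl G₁ ∧ asg₁ D = C then
          θ₁ D (fun a => Fin.cast (d_toV₁ d₀ d₁ d₂ a.1)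
            (α ⟨toV₁ a.1, h.2 ▸ (hasg₁ D h.1).2 (Finset.mem_image_of_mem _ a.2)⟩)) else 1) *
      (∏ D ∈ mcl G₂, if h : D ∈ mcl G₂ ∧ asg₂ D = C then
          θ₂ D (fun a => Fin.cast (d_toV₂ d₀ d₁ d₂ a.1)
            (α ⟨toV₂ a.1, h.2 ▸ (hasg₂ D h.1).2 (Finset.mem_image_of_mem _ a.2)⟩)) else 1)
      with hθ
    refine ⟨θ, funext fun β => ?_⟩
    show (∏ C ∈ mcl (glued2 G₁ G₂), θ C (fun j => β j)) = _
    simp only [hθ]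
    rw [Finset.prod_mul_distrib, Finset.prod_comm (t := mcl G₁),
      Finset.prod_comm (t := mcl G₂)]
    congr 1
    · refine Finset.prod_congr rfl fun D hD => ?_
      refine (Finset.prod_eq_single_of_mem (asg₁ D) (hasg₁ D hD).1 ?_).trans ?_
      · intro C hC hne
        exact dif_neg (by rintro ⟨-, h2⟩; exact hne h2.symm)
      · rw [dif_pos ⟨hD, rfl⟩]
        refine congrArg (θ₁ D) (funext fun a => ?_)
        rw [res₁_eq]
    · refine Finset.prod_congr rfl fun D hD => ?_
      refine (Finset.prod_eq_single_of_mem (asg₂ D) (hasg₂ D hD).1 ?_).trans ?_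
      · intro C hC hne
        exact dif_neg (by rintro ⟨-, h2⟩; exact hne h2.symm)
      · rw [dif_pos ⟨hD, rfl⟩]
        refine congrArg (θ₂ D) (funext fun a => ?_)
        rw [res₂_eq]

end MyAux

/-- Glueing two graphs along a common induced subgraph corresponds to the toric
fibre product of their graphical models: the image of `φ_{G₁ +_H G₂}` is the set
of pointwise products of points in the images of `φ_{G₁}` and `φ_{G₂}`; in
particular `X_G = X_{G₁} * X_{G₂}`. -/
theorem glued_graphicalModel_eq_tfp [Fintype N₀] [Fintype M₁] [Fintype M₂]
    (G₁ : SimpleGraph (N₀ ⊕ M₁)) (G₂ : SimpleGraph (N₀ ⊕ M₂))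
    (hind : ∀ u v : N₀, G₁.Adj (Sum.inl u) (Sum.inl v) ↔
      G₂.Adj (Sum.inl u) (Sum.inl v))
    (hd₀ : ∀ j, 1 ≤ d₀ j) (hd₁ : ∀ j, 1 ≤ d₁ j) (hd₂ : ∀ j, 1 ≤ d₂ j) :
    (Set.range (phiG (glued2 G₁ G₂) (Sum.elim d₀ (Sum.elim d₁ d₂))) =
      {F | ∃ u ∈ Set.range (phiG G₁ (Sum.elim d₀ d₁)),
           ∃ v ∈ Set.range (phiG G₂ (Sum.elim d₀ d₂)),
           F = fun β => u (res₁ d₀ d₁ d₂ β) * v (res₂ d₀ d₁ d₂ β)}) ∧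
    (zariskiClosure (Set.range (phiG (glued2 G₁ G₂) (Sum.elim d₀ (Sum.elim d₁ d₂)))) =
      zariskiClosure
        {F | ∃ u ∈ zariskiClosure (Set.range (phiG G₁ (Sum.elim d₀ d₁))),
             ∃ v ∈ zariskiClosure (Set.range (phiG G₂ (Sum.elim d₀ d₂))),
             F = fun β => u (res₁ d₀ d₁ d₂ β) * v (res₂ d₀ d₁ d₂ β)}) := by
  refine ⟨part1 d₀ d₁ d₂ hind, ?_⟩
  rw [part1 d₀ d₁ d₂ hind]
  exact tfp_closure_eq (res₁ d₀ d₁ d₂) (res₂ d₀ d₁ d₂) _ _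

end Glue
end

section
/- Let K be a field, and for each i ∈ [s] let X_i ⊆ ∏_{j=1}^r K^{d_{ij}} be a Hadamard-stable subset. Let S = (S_1,…,S_s) and T = (T_1,…,T_s) be tuples of finite sets and π = (π_1,…,π_s) with π_i : S_i → T_i arbitrary maps. Define the pushforward π_* : ∏_{j=1}^r (∏_i [d_{ij}]^{S_i} → K) → ∏_{j=1}^r (∏_i [d_{ij}]^{T_i} → K) by (π_*F)_j(α) = F_j((α_{i, π_i(k)})_{i∈[s], k∈S_i}) for α = (α_{i,l})_{i∈[s], l∈T_i}. Then π_* maps the set-theoretic iterated toric fibre product 𝒳(S) := { F : F_j(α) = ∏_{i∈[s]} ∏_{k∈S_i} x^{(i,k)}_j(α_{i,k}) for some x^{(i,k)} ∈ X_i } into 𝒳(T); in particular, after extending scalars the tuple π_*F is again a tuple of tensors of rank at most one built from elements of the X_i. -/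
/-- A subset `X ⊆ ∏_{j=1}^r K^{d_j}` is Hadamard-stable if it contains the all-one
vector and is closed under the coordinatewise (Hadamard) product. -/
def HadamardStable {K : Type*} [Field K] {r : ℕ} {d : Fin r → ℕ}
    (X : Set ((j : Fin r) → Fin (d j) → K)) : Prop :=
  (fun _ _ => (1 : K)) ∈ X ∧ ∀ x ∈ X, ∀ z ∈ X, (fun j t => x j t * z j t) ∈ X

/-- The set-theoretic iterated toric fibre product `𝒳(S) = X_1^{*S_1} * ⋯ * X_s^{*S_s}`
for a tuple `S = (S_1,…,S_s)` of finite sets: all `r`-tuples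
`F_j(α) = ∏_{i∈[s]} ∏_{k∈S_i} x^{(i,k)}_j(α_{i,k})` for choices `x^{(i,k)} ∈ X_i`. -/
def tfpFamily {K : Type*} [Field K] {s r : ℕ} {d : Fin s → Fin r → ℕ}
    (X : (i : Fin s) → Set ((j : Fin r) → Fin (d i j) → K))
    (S : Fin s → Type*) [∀ i, Fintype (S i)] :
    Set ((j : Fin r) → (((i : Fin s) → S i → Fin (d i j)) → K)) :=
  {F | ∃ x : (i : Fin s) → S i → ((j : Fin r) → Fin (d i j) → K),
    (∀ i k, x i k ∈ X i) ∧ ∀ j α, F j α = ∏ i, ∏ k, x i k j (α i k)}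

/-- For Hadamard-stable sets `X_i`, the pushforward along any tuple of maps
`π = (π_i : S_i → T_i)` maps the set-theoretic iterated toric fibre product
`𝒳(S)` into `𝒳(T)`. -/
theorem tfpFamily_pushforward_mem (K : Type*) [Field K] (s r : ℕ)
    (d : Fin s → Fin r → ℕ)
    (X : (i : Fin s) → Set ((j : Fin r) → Fin (d i j) → K))
    (hX : ∀ i, HadamardStable (X i))
    (S T : Fin s → Type*) [∀ i, Fintype (S i)] [∀ i, Fintype (T i)]
    (π : (i : Fin s) → S i → T i)
    (F : (j : Fin r) → (((i : Fin s) → S i → Fin (d i j)) → K))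
    (hF : F ∈ tfpFamily X S) :
    (fun j (α : (i : Fin s) → T i → Fin (d i j)) =>
        F j (fun i k => α i (π i k))) ∈ tfpFamily X T := by
  classical
  obtain ⟨x, hx, hFeq⟩ := hF
  refine ⟨fun i l => ∏ k ∈ Finset.univ.filter (fun k => π i k = l), x i k, ?_, ?_⟩
  · intro i l
    refine Finset.prod_induction _ (· ∈ X i) ?_ ?_ (fun k _ => hx i k)
    · intro a b ha hb
      exact (hX i).2 a ha b hb
    · exact (hX i).1
  · intro j α
    simp only []
    rw [hFeq]
    refine Finset.prod_congr rfl fun i _ => ?_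
    rw [← Finset.prod_fiberwise Finset.univ (π i) (fun k => x i k j (α i (π i k)))]
    refine Finset.prod_congr rfl fun l _ => ?_
    rw [Finset.prod_apply, Finset.prod_apply]
    refine Finset.prod_congr rfl fun k hk => ?_
    rw [(Finset.mem_filter.1 hk).2]
end
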